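/- arXiv:2506.23726 — 4 statements merged into one kernel-verified Lean document; each statement's English description precedes it below -/
import Mathlib

section
/- Let A be a real m×d matrix and A⁺ a real d×m matrix satisfying the four Penrose equations, and let Σ be any real m×m matrix. Let α, β, γ : ℝ → ℝ be differentiable at a point t with α(t) ≠ 0. Define F(t) := (α'(t)/α(t)) • (1 − A⁺·A) and Σ̂(s) := γ(s) • (A⁺·Σ·(A⁺)ᵀ) + β(s) • (1 − A⁺·A). Then Σ̂ is differentiable at t and Σ̂'(t) − F(t)·Σ̂(t) − Σ̂(t)·F(t)ᵀ = γ'(t) • (A⁺·Σ·(A⁺)ᵀ) + (β'(t) − 2β(t)·α'(t)/α(t)) • (1 − A⁺·A). (Diffusion coefficient identity G_t G_tᵀ = dΣ_t/dt − F_t Σ_t − Σ_t F_tᵀ for the SDB process.) -/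
open scoped Matrix

attribute [local instance] Matrix.normedAddCommGroup Matrix.normedSpace

/-- Diffusion coefficient identity `G_t G_tᵀ = dΣ_t/dt − F_t Σ_t − Σ_t F_tᵀ` for the
SDB process. -/
theorem sdb_diffusion_coefficient (m d : ℕ)
    (A : Matrix (Fin m) (Fin d) ℝ) (Ap : Matrix (Fin d) (Fin m) ℝ)
    (h1 : A * Ap * A = A) (h2 : Ap * A * Ap = Ap)
    (h3 : (A * Ap)ᵀ = A * Ap) (h4 : (Ap * A)ᵀ = Ap * A)
    (S : Matrix (Fin m) (Fin m) ℝ)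
    (α β γ : ℝ → ℝ) (a' b' c' t : ℝ)
    (hα : HasDerivAt α a' t) (hβ : HasDerivAt β b' t) (hγ : HasDerivAt γ c' t)
    (hαt : α t ≠ 0)
    (F : Matrix (Fin d) (Fin d) ℝ)
    (hF : F = (a' / α t) • ((1 : Matrix (Fin d) (Fin d) ℝ) - Ap * A))
    (Sh : ℝ → Matrix (Fin d) (Fin d) ℝ)
    (hSh : ∀ s : ℝ, Sh s =
      γ s • (Ap * S * Apᵀ) + β s • ((1 : Matrix (Fin d) (Fin d) ℝ) - Ap * A)) :
    HasDerivAt Sh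
        (c' • (Ap * S * Apᵀ) + b' • ((1 : Matrix (Fin d) (Fin d) ℝ) - Ap * A)) t ∧
      (c' • (Ap * S * Apᵀ) + b' • ((1 : Matrix (Fin d) (Fin d) ℝ) - Ap * A))
          - F * Sh t - Sh t * Fᵀ =
        c' • (Ap * S * Apᵀ) +
          (b' - 2 * β t * (a' / α t)) • ((1 : Matrix (Fin d) (Fin d) ℝ) - Ap * A) := by
  set C : Matrix (Fin d) (Fin d) ℝ := Ap * S * Apᵀ with hC
  set D : Matrix (Fin d) (Fin d) ℝ := (1 : Matrix (Fin d) (Fin d) ℝ) - Ap * A with hD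
  constructor
  · have : Sh = fun s => γ s • C + β s • D := funext hSh
    rw [this]
    exact (hγ.smul_const C).add (hβ.smul_const D)
  · have hDC : D * C = 0 := by
      rw [hD, hC, sub_mul, one_mul,
        show Ap * A * (Ap * S * Apᵀ) = Ap * S * Apᵀ from by
          rw [← Matrix.mul_assoc, ← Matrix.mul_assoc, h2], sub_self]
    have key : Apᵀ * (Ap * A) = Apᵀ := by
      rw [← h4, ← Matrix.transpose_mul, h2]
    have hCD : C * D = 0 := by
      rw [hC, hD, mul_sub, mul_one,
        show Ap * S * Apᵀ * (Ap * A) = Ap * S * Apᵀ from by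
          rw [Matrix.mul_assoc (Ap * S), key], sub_self]
    have hDD : D * D = D := by
      rw [hD, sub_mul, mul_sub, mul_sub, one_mul, mul_one,
        show Ap * A * (Ap * A) = Ap * A from by rw [← Matrix.mul_assoc, h2]]
      simp
    have hDt : Dᵀ = D := by rw [hD, Matrix.transpose_sub, Matrix.transpose_one, h4]
    rw [hF, hSh t]
    rw [Matrix.smul_mul, Matrix.mul_add, Matrix.mul_smul, Matrix.mul_smul, hDC, hDD,
      Matrix.transpose_smul, hDt, Matrix.mul_smul, Matrix.add_mul, Matrix.smul_mul,
      Matrix.smul_mul, hCD, hDD]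
    simp only [smul_zero, smul_smul, zero_add, add_zero]
    match_scalars <;> ring
end

section
/- Let g : ℝ → ℝ be continuous on [0,1], let σ_t² := ∫_0^t g(τ)² dτ, σ̄_t² := ∫_t^1 g(τ)² dτ, and C := ∫_0^1 g(τ)² dτ, and assume C > 0. Define α_t := σ̄_t²/(σ_t² + σ̄_t²) and β_t := σ_t²·σ̄_t²/(σ_t² + σ̄_t²). Then for every t ∈ (0,1) with σ̄_t² > 0, α and β are differentiable at t, α(t) > 0, and β'(t) − 2·β(t)·(α'(t)/α(t)) = g(t)². (Self-consistency of the Schrödinger-bridge schedule for SDB: the induced null-space diffusion coefficient equals g², the key computation in the proof of Theorem 2.) -/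
/-- Self-consistency of the Schrödinger-bridge schedule for SDB: the induced null-space
diffusion coefficient equals `g²` (key computation in the proof of Theorem 2). -/
theorem sdb_sb_schedule_self_consistency (g : ℝ → ℝ) (hg : ContinuousOn g (Set.Icc 0 1))
    (σ σb : ℝ → ℝ) (C : ℝ)
    (hσ : ∀ t : ℝ, σ t = ∫ τ in (0:ℝ)..t, (g τ) ^ 2)
    (hσb : ∀ t : ℝ, σb t = ∫ τ in t..(1:ℝ), (g τ) ^ 2)
    (hC : C = ∫ τ in (0:ℝ)..(1:ℝ), (g τ) ^ 2) (hCpos : 0 < C)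
    (α β : ℝ → ℝ)
    (hα : ∀ t : ℝ, α t = σb t / (σ t + σb t))
    (hβ : ∀ t : ℝ, β t = σ t * σb t / (σ t + σb t)) :
    ∀ t ∈ Set.Ioo (0:ℝ) 1, 0 < σb t →
      DifferentiableAt ℝ α t ∧ DifferentiableAt ℝ β t ∧ 0 < α t ∧
        deriv β t - 2 * β t * (deriv α t / α t) = (g t) ^ 2 := by
  intro t ht hbpos
  obtain ⟨ht0, ht1⟩ := ht
  have hC0 : C ≠ 0 := ne_of_gt hCpos
  have h2 : ContinuousOn (fun τ => (g τ) ^ 2) (Set.Icc 0 1) := hg.pow 2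
  have hct : ContinuousAt (fun τ => (g τ) ^ 2) t :=
    (h2 t ⟨ht0.le, ht1.le⟩).continuousAt (Icc_mem_nhds ht0 ht1)
  have hmeas : StronglyMeasurableAtFilter (fun τ => (g τ) ^ 2) (nhds t) :=
    (h2.mono Set.Ioo_subset_Icc_self).stronglyMeasurableAtFilter isOpen_Ioo t ⟨ht0, ht1⟩
  have hint1 : IntervalIntegrable (fun τ => (g τ) ^ 2) MeasureTheory.volume 0 t :=
    (h2.mono (by rw [Set.uIcc_of_le ht0.le]; exact Set.Icc_subset_Icc le_rfl ht1.le)).intervalIntegrable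
  have hint2 : IntervalIntegrable (fun τ => (g τ) ^ 2) MeasureTheory.volume t 1 :=
    (h2.mono (by rw [Set.uIcc_of_le ht1.le]; exact Set.Icc_subset_Icc ht0.le le_rfl)).intervalIntegrable
  have hσfun : σ = fun u => ∫ τ in (0:ℝ)..u, (g τ) ^ 2 := funext hσ
  have hσbfun : σb = fun u => ∫ τ in u..(1:ℝ), (g τ) ^ 2 := funext hσb
  have hdσ : HasDerivAt σ ((g t) ^ 2) t := by
    rw [hσfun]
    exact intervalIntegral.integral_hasDerivAt_right hint1 hmeas hct
  have hdσb : HasDerivAt σb (-((g t) ^ 2)) t := by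
    rw [hσbfun]
    exact intervalIntegral.integral_hasDerivAt_left hint2 hmeas hct
  have hsum : σ t + σb t = C := by
    rw [hσ, hσb, hC]
    exact intervalIntegral.integral_add_adjacent_intervals hint1 hint2
  have hden : σ t + σb t ≠ 0 := by rw [hsum]; exact hC0
  have hdsum : HasDerivAt (fun u => σ u + σb u) ((g t) ^ 2 + -((g t) ^ 2)) t := hdσ.add hdσb
  have hαfun : α = fun u => σb u / (σ u + σb u) := funext hα
  have hβfun : β = fun u => σ u * σb u / (σ u + σb u) := funext hβ
  have hdα : HasDerivAt α
      ((-((g t) ^ 2) * (σ t + σb t) - σb t * ((g t) ^ 2 + -((g t) ^ 2))) / (σ t + σb t) ^ 2) t := by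
    rw [hαfun]; exact hdσb.div hdsum hden
  have hdβ : HasDerivAt β
      ((((g t) ^ 2 * σb t + σ t * -((g t) ^ 2)) * (σ t + σb t)
        - σ t * σb t * ((g t) ^ 2 + -((g t) ^ 2))) / (σ t + σb t) ^ 2) t := by
    rw [hβfun]; exact (hdσ.mul hdσb).div hdsum hden
  refine ⟨hdα.differentiableAt, hdβ.differentiableAt, ?_, ?_⟩
  · rw [hα, hsum]; positivity
  · rw [hdβ.deriv, hdα.deriv, hβ, hα]
    have hs : σ t = C - σb t := by linarith
    have hcc : C - σb t + σb t = C := by ring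
    rw [hs, hcc]
    have hb0 : σb t ≠ 0 := ne_of_gt hbpos
    field_simp
    ring
end

section
/- Let g : ℝ → ℝ be continuous on [0,1], let σ_t² := ∫_0^t g(τ)² dτ, σ̄_t² := ∫_t^1 g(τ)² dτ, and C := ∫_0^1 g(τ)² dτ; assume C > 0 and σ̄_t² > 0 for every t ∈ (0,1). Define α_t := σ̄_t²/(σ_t² + σ̄_t²) and β_t := σ_t²·σ̄_t²/(σ_t² + σ̄_t²). Then α_t²/β_t = σ̄_t²/(C·σ_t²) for t ∈ (0,1) with σ_t² > 0, and α_t²/β_t tends to 0 as t tends to 1 from the left. (The Schrödinger-bridge schedule of SDB satisfies the second hypothesis lim_{t→1} α_t²/β_t = 0 of Theorem 3.) -/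
/-!
On `[0,1]` the two integrals add up to `C`, so `α = σ̄²/C` and `β = σ²σ̄²/C`, whence
`α²/β = σ̄²/(C σ²)`. As `t → 1⁻`, continuity of the primitives gives `σ̄² → 0` and `σ² → C`.
-/

open Filter Set Topology MeasureTheory intervalIntegral

/-- No side conditions are needed: every degenerate case reads `0 = 0` because `x / 0 = 0`. -/
theorem div_sq_div_mul_div {K : Type*} [Field K] (a b c : K) :
    (b / c) ^ 2 / (a * b / c) = b / (c * a) := by
  rcases eq_or_ne a 0 with rfl | ha; · simp
  rcases eq_or_ne b 0 with rfl | hb; · simp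
  rcases eq_or_ne c 0 with rfl | hc; · simp
  field_simp

theorem tendsto_div_const_mul_of_tendsto {α : Type*} {l : Filter α} {u v : α → ℝ} {c : ℝ}
    (hu : Tendsto u l (𝓝 0)) (hv : Tendsto v l (𝓝 c)) :
    Tendsto (fun x => u x / (c * v x)) l (𝓝 0) := by
  rcases eq_or_ne c 0 with rfl | hc
  · simpa using tendsto_const_nhds
  · rw [← zero_div (c * c)]
    exact hu.div (hv.const_mul c) (mul_ne_zero hc hc)

theorem ContinuousOn.tendsto_nhdsLT_of_Icc {f : ℝ → ℝ} {a b : ℝ} (hf : ContinuousOn f (Icc a b))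
    (hab : a < b) : Tendsto f (𝓝[<] b) (𝓝 (f b)) :=
  ((hf b (right_mem_Icc.2 hab.le)).mono_of_mem_nhdsWithin (Icc_mem_nhdsLT hab)).tendsto

theorem integral_add_integral_of_mem_Icc {E : Type*} [NormedAddCommGroup E] [NormedSpace ℝ E]
    {f : ℝ → E} {a b t : ℝ} (hf : IntegrableOn f (Icc a b)) (ht : t ∈ Icc a b) :
    (∫ x in a..t, f x) + ∫ x in t..b, f x = ∫ x in a..b, f x := by
  refine integral_add_adjacent_intervals (IntegrableOn.intervalIntegrable ?_)
    (IntegrableOn.intervalIntegrable ?_)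
  · exact hf.mono_set (by rw [uIcc_of_le ht.1]; exact Icc_subset_Icc_right ht.2)
  · exact hf.mono_set (by rw [uIcc_of_le ht.2]; exact Icc_subset_Icc_left ht.1)

theorem sdb_sb_alpha_sq_over_beta_limit_general (g : ℝ → ℝ) (hg : ContinuousOn g (Set.Icc 0 1))
    (σ σb : ℝ → ℝ) (C : ℝ)
    (hσ : ∀ t : ℝ, σ t = ∫ τ in (0:ℝ)..t, (g τ) ^ 2)
    (hσb : ∀ t : ℝ, σb t = ∫ τ in t..(1:ℝ), (g τ) ^ 2)
    (hC : C = ∫ τ in (0:ℝ)..(1:ℝ), (g τ) ^ 2)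
    (α β : ℝ → ℝ)
    (hα : ∀ t : ℝ, α t = σb t / (σ t + σb t))
    (hβ : ∀ t : ℝ, β t = σ t * σb t / (σ t + σb t)) :
    (∀ t ∈ Set.Ioo (0:ℝ) 1, 0 < σ t → (α t) ^ 2 / β t = σb t / (C * σ t)) ∧
      Tendsto (fun t => (α t) ^ 2 / β t) (nhdsWithin 1 (Set.Iio 1)) (nhds 0) := by
  have hg2 : IntegrableOn (fun τ => g τ ^ 2) (Icc 0 1) := (hg.pow 2).integrableOn_Icc
  have hσ_add_σb : ∀ t ∈ Icc (0:ℝ) 1, σ t + σb t = C := fun t ht => by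
    rw [hσ, hσb, hC, integral_add_integral_of_mem_Icc hg2 ht]
  have hratio : ∀ t ∈ Icc (0:ℝ) 1, α t ^ 2 / β t = σb t / (C * σ t) := fun t ht => by
    rw [hα, hβ, hσ_add_σb t ht, div_sq_div_mul_div]
  refine ⟨fun t ht _ => hratio t (Ioo_subset_Icc_self ht), ?_⟩
  rw [← uIcc_of_le zero_le_one] at hg2
  have hσ_cont : ContinuousOn σ (Icc 0 1) := by
    simpa only [← funext hσ, uIcc_of_le zero_le_one] using continuousOn_primitive_interval hg2
  have hσb_cont : ContinuousOn σb (Icc 0 1) := by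
    simpa only [← funext hσb, uIcc_of_le zero_le_one] using continuousOn_primitive_interval_left hg2
  have hσ_lim : Tendsto σ (𝓝[<] 1) (𝓝 C) := by
    simpa only [hσ 1, ← hC] using hσ_cont.tendsto_nhdsLT_of_Icc zero_lt_one
  have hσb_lim : Tendsto σb (𝓝[<] 1) (𝓝 0) := by
    simpa only [hσb 1, integral_same] using hσb_cont.tendsto_nhdsLT_of_Icc zero_lt_one
  refine (tendsto_div_const_mul_of_tendsto hσb_lim hσ_lim).congr' ?_
  filter_upwards [Icc_mem_nhdsLT zero_lt_one] with t ht using (hratio t ht).symm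

/-- The Schrödinger-bridge schedule of SDB satisfies the second hypothesis
`lim_{t→1} α_t²/β_t = 0` of Theorem 3. -/
theorem sdb_sb_alpha_sq_over_beta_limit (g : ℝ → ℝ) (hg : ContinuousOn g (Set.Icc 0 1))
    (σ σb : ℝ → ℝ) (C : ℝ)
    (hσ : ∀ t : ℝ, σ t = ∫ τ in (0:ℝ)..t, (g τ) ^ 2)
    (hσb : ∀ t : ℝ, σb t = ∫ τ in t..(1:ℝ), (g τ) ^ 2)
    (hC : C = ∫ τ in (0:ℝ)..(1:ℝ), (g τ) ^ 2) (hCpos : 0 < C)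
    (hσbpos : ∀ t ∈ Set.Ioo (0:ℝ) 1, 0 < σb t)
    (α β : ℝ → ℝ)
    (hα : ∀ t : ℝ, α t = σb t / (σ t + σb t))
    (hβ : ∀ t : ℝ, β t = σ t * σb t / (σ t + σb t)) :
    (∀ t ∈ Set.Ioo (0:ℝ) 1, 0 < σ t → (α t) ^ 2 / β t = σb t / (C * σ t)) ∧
      Tendsto (fun t => (α t) ^ 2 / β t) (nhdsWithin 1 (Set.Iio 1)) (nhds 0) :=
  sdb_sb_alpha_sq_over_beta_limit_general g hg σ σb C hσ hσb hC α β hα hβ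
end

section
/- Let (Ω, ℱ, ℙ) be a probability space and let ε : Ω → (Fin m → ℝ) and ε' : Ω → (Fin d → ℝ) be random vectors such that the m + d real random variables (ε_1, …, ε_m, ε'_1, …, ε'_d) are mutually independent, each with mean 0, variance 1, and finite second moment (e.g., each distributed as the standard Gaussian gaussianReal 0 1). Let A be a real m×d matrix, A⁺ a real d×m matrix satisfying the four Penrose equations, S a real m×m matrix, α, β, γ nonnegative reals, and x ∈ ℝ^d. Define X := H·x + √γ • (A⁺·S·ε) + √β • ((1 − A⁺·A)·ε') where H := A⁺·A + α • (1 − A⁺·A). Then for all i, j ∈ Fin d, Cov(X_i, X_j) = (γ • (A⁺·(S·Sᵀ)·(A⁺)ᵀ) + β • (1 − A⁺·A))_{ij}. (Covariance of the SDB forward sample x_t | x_0 equals Σ_t = γ_t A⁺ΣA⁺ᵀ + β_t(I − A⁺A) when S·Sᵀ = Σ, part of the claim that x_t | x_0 ∼ N(H_t x_0, Σ_t).) -/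
open scoped Matrix
open MeasureTheory ProbabilityTheory

/-!
`X` is an affine image `H x + M ζ` of the white-noise vector `ζ = (ε, ε')`, with the block matrix
`M = [√γ A⁺S | √β (1 - A⁺A)]`. The covariance of such an image is `M Mᵀ`, which splits into
`γ A⁺SSᵀA⁺ᵀ + β (1 - A⁺A)(1 - A⁺A)ᵀ`; by the Penrose equations `1 - A⁺A` is a symmetric
idempotent, so the last product is `1 - A⁺A` itself.
-/

namespace ProbabilityTheory

variable {Ω ι κ : Type*} [MeasurableSpace Ω] {P : Measure Ω} [IsProbabilityMeasure P]
  [Fintype ι] {Z : ι → Ω → ℝ}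

lemma covariance_add_mulVec (hL2 : ∀ k, MemLp (Z k) 2 P) (v : κ → ℝ) (M : Matrix κ ι ℝ)
    (i j : κ) :
    cov[fun ω => (v + M *ᵥ fun k => Z k ω) i, fun ω => (v + M *ᵥ fun k => Z k ω) j; P] =
      (M * Matrix.of (fun k l => cov[Z k, Z l; P]) * Mᵀ) i j := by
  have hterm : ∀ i k, MemLp (fun ω => M i k * Z k ω) 2 P := fun i k => (hL2 k).const_mul _
  have hsum : ∀ i, Integrable (fun ω => ∑ k, M i k * Z k ω) P := fun i =>
    (memLp_finsetSum _ fun k _ => hterm i k).integrable one_le_two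
  simp only [Pi.add_apply, Matrix.mulVec, dotProduct]
  rw [covariance_const_add_left (hsum i), covariance_const_add_right (hsum j),
    covariance_fun_sum_fun_sum (hterm i) (hterm j)]
  simp only [covariance_const_mul_left, covariance_const_mul_right, Matrix.mul_apply,
    Matrix.of_apply, Matrix.transpose_apply, Finset.sum_mul]
  rw [Finset.sum_comm]
  refine Finset.sum_congr rfl fun k _ => Finset.sum_congr rfl fun l _ => by ring

lemma covariance_add_mulVec_of_pairwise_indepFun [DecidableEq ι] (hL2 : ∀ k, MemLp (Z k) 2 P)
    (hvar : ∀ k, Var[Z k; P] = 1) (hindep : Pairwise fun k l => Z k ⟂ᵢ[P] Z l)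
    (v : κ → ℝ) (M : Matrix κ ι ℝ) (i j : κ) :
    cov[fun ω => (v + M *ᵥ fun k => Z k ω) i, fun ω => (v + M *ᵥ fun k => Z k ω) j; P] =
      (M * Mᵀ) i j := by
  have hwhite : Matrix.of (fun k l => cov[Z k, Z l; P]) = 1 := by
    ext k l
    obtain rfl | hkl := eq_or_ne k l
    · rw [Matrix.of_apply, covariance_self (hL2 k).aestronglyMeasurable.aemeasurable, hvar,
        Matrix.one_apply_eq]
    · rw [Matrix.of_apply, (hindep hkl).covariance_eq_zero (hL2 k) (hL2 l), Matrix.one_apply_ne hkl]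
  rw [covariance_add_mulVec hL2, hwhite, Matrix.mul_one]

end ProbabilityTheory

theorem sdb_forward_covariance_general
    {Ω : Type*} [MeasurableSpace Ω] (P : Measure Ω) [IsProbabilityMeasure P]
    (m d : ℕ)
    (ε : Ω → Fin m → ℝ) (ε' : Ω → Fin d → ℝ)
    (Z : Fin m ⊕ Fin d → Ω → ℝ)
    (hZ : Z = Sum.elim (fun j ω => ε ω j) (fun k ω => ε' ω k))
    (hL2 : ∀ k : Fin m ⊕ Fin d, MemLp (Z k) 2 P)
    (hvar : ∀ k : Fin m ⊕ Fin d, variance (Z k) P = 1)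
    (hindep : iIndepFun (m := fun _ : Fin m ⊕ Fin d => (inferInstance : MeasurableSpace ℝ)) Z P)
    (A : Matrix (Fin m) (Fin d) ℝ) (Ap : Matrix (Fin d) (Fin m) ℝ)
    (h2 : Ap * A * Ap = Ap)
    (h4 : (Ap * A)ᵀ = Ap * A)
    (S : Matrix (Fin m) (Fin m) ℝ)
    (β γ : ℝ) (hβ : 0 ≤ β) (hγ : 0 ≤ γ)
    (x : Fin d → ℝ)
    (H : Matrix (Fin d) (Fin d) ℝ)
    (X : Ω → Fin d → ℝ)
    (hX : ∀ ω : Ω, X ω = H *ᵥ x + Real.sqrt γ • (Ap *ᵥ (S *ᵥ ε ω)) +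
      Real.sqrt β • (((1 : Matrix (Fin d) (Fin d) ℝ) - Ap * A) *ᵥ ε' ω)) :
    ∀ i j : Fin d,
      (∫ ω, (X ω i - ∫ ω', X ω' i ∂P) * (X ω j - ∫ ω', X ω' j ∂P) ∂P) =
        (γ • (Ap * (S * Sᵀ) * Apᵀ) +
          β • ((1 : Matrix (Fin d) (Fin d) ℝ) - Ap * A)) i j := by
  intro i j
  set Q : Matrix (Fin d) (Fin d) ℝ := 1 - Ap * A
  set M := (Real.sqrt γ • (Ap * S)).fromCols (Real.sqrt β • Q)
  have hXM : X = fun ω => H *ᵥ x + M *ᵥ fun k => Z k ω := by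
    funext ω
    have hZω : (fun k => Z k ω) = Sum.elim (ε ω) (ε' ω) := by
      subst hZ; ext (k | k) <;> rfl
    rw [hX ω, hZω, Matrix.fromCols_mulVec_sumElim, add_assoc, Matrix.smul_mulVec,
      Matrix.smul_mulVec, Matrix.mulVec_mulVec]
  have hQidem : IsIdempotentElem Q := by
    refine IsIdempotentElem.one_sub ?_
    rw [IsIdempotentElem, ← Matrix.mul_assoc, h2]
  have hQsymm : Qᵀ = Q := by rw [Matrix.transpose_sub, Matrix.transpose_one, h4]
  have hQ : Q * Qᵀ = Q := by rw [hQsymm, hQidem.eq]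
  have hMM : M * Mᵀ = γ • (Ap * (S * Sᵀ) * Apᵀ) + β • Q := by
    simp only [M, Matrix.transpose_fromCols, Matrix.fromCols_mul_fromRows, Matrix.transpose_smul,
      Matrix.smul_mul, Matrix.mul_smul, smul_smul, Real.mul_self_sqrt hγ, Real.mul_self_sqrt hβ,
      hQ, Matrix.transpose_mul, Matrix.mul_assoc]
  change cov[fun ω => X ω i, fun ω => X ω j; P] = _
  rw [hXM, covariance_add_mulVec_of_pairwise_indepFun hL2 hvar (fun k l => hindep.indepFun), hMM]

/-- Covariance of the SDB forward sample `x_t | x_0` equals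
`Σ_t = γ_t A⁺ΣA⁺ᵀ + β_t(I − A⁺A)` when `S·Sᵀ = Σ` (part of the claim that
`x_t | x_0 ∼ N(H_t x_0, Σ_t)`). -/
theorem sdb_forward_covariance
    {Ω : Type*} [MeasurableSpace Ω] (P : Measure Ω) [IsProbabilityMeasure P]
    (m d : ℕ)
    (ε : Ω → Fin m → ℝ) (ε' : Ω → Fin d → ℝ)
    (Z : Fin m ⊕ Fin d → Ω → ℝ)
    (hZ : Z = Sum.elim (fun j ω => ε ω j) (fun k ω => ε' ω k))
    (hmeas : ∀ k : Fin m ⊕ Fin d, Measurable (Z k))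
    (hL2 : ∀ k : Fin m ⊕ Fin d, MemLp (Z k) 2 P)
    (hmean : ∀ k : Fin m ⊕ Fin d, ∫ ω, Z k ω ∂P = 0)
    (hvar : ∀ k : Fin m ⊕ Fin d, variance (Z k) P = 1)
    (hindep : iIndepFun (m := fun _ : Fin m ⊕ Fin d => (inferInstance : MeasurableSpace ℝ)) Z P)
    (A : Matrix (Fin m) (Fin d) ℝ) (Ap : Matrix (Fin d) (Fin m) ℝ)
    (h1 : A * Ap * A = A) (h2 : Ap * A * Ap = Ap)
    (h3 : (A * Ap)ᵀ = A * Ap) (h4 : (Ap * A)ᵀ = Ap * A)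
    (S : Matrix (Fin m) (Fin m) ℝ)
    (α β γ : ℝ) (hα : 0 ≤ α) (hβ : 0 ≤ β) (hγ : 0 ≤ γ)
    (x : Fin d → ℝ)
    (H : Matrix (Fin d) (Fin d) ℝ)
    (hH : H = Ap * A + α • ((1 : Matrix (Fin d) (Fin d) ℝ) - Ap * A))
    (X : Ω → Fin d → ℝ)
    (hX : ∀ ω : Ω, X ω = H *ᵥ x + Real.sqrt γ • (Ap *ᵥ (S *ᵥ ε ω)) +
      Real.sqrt β • (((1 : Matrix (Fin d) (Fin d) ℝ) - Ap * A) *ᵥ ε' ω)) :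
    ∀ i j : Fin d,
      (∫ ω, (X ω i - ∫ ω', X ω' i ∂P) * (X ω j - ∫ ω', X ω' j ∂P) ∂P) =
        (γ • (Ap * (S * Sᵀ) * Apᵀ) +
          β • ((1 : Matrix (Fin d) (Fin d) ℝ) - Ap * A)) i j :=
  sdb_forward_covariance_general P m d ε ε' Z hZ hL2 hvar hindep A Ap h2 h4 S β γ hβ hγ x H X hX
end
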